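/- arXiv:math/0406483 — 2 statements merged into one kernel-verified Lean document; each statement's English description precedes it below -/
import Mathlib

section
/- Let C be a small Grothendieck site, X a sheaf of sets on C, and π: Y → X a presheaf map. Then π represents a sheaf on the fibred site C/X if and only if Y is a sheaf on C. -/
open CategoryTheory Opposite Limits

universe v u

variable {C : Type u} [Category.{v} C]

/-- A presheaf map `π : Y ⟶ X` *represents a sheaf on the fibred site `C/X`* if for every
object `U` of `C`, every section `x ∈ X(U)`, every covering sieve `S` of `U`, and every
compatible family of sections `σ_α` of `Y` lying (via `π`) over the restrictions of `x`
along the members `α` of `S`, there is a unique section of `Y` over `U` lying over `x`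
and restricting to the given family. -/
def RepresentsSheaf (J : GrothendieckTopology C) {Y X : Cᵒᵖ ⥤ Type v} (π : Y ⟶ X) : Prop :=
  ∀ (U : C) (x : X.obj (op U)) (S : Sieve U), S ∈ J U →
    ∀ (σ : ∀ ⦃V : C⦄ (α : V ⟶ U), S α → Y.obj (op V)),
      (∀ ⦃V : C⦄ (α : V ⟶ U) (hα : S α), π.app (op V) (σ α hα) = X.map α.op x) →
      (∀ ⦃V W : C⦄ (α : V ⟶ U) (hα : S α) (β : W ⟶ V),
          Y.map β.op (σ α hα) = σ (β ≫ α) (S.downward_closed hα β)) →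
      ∃! s : Y.obj (op U), π.app (op U) s = x ∧
        ∀ ⦃V : C⦄ (α : V ⟶ U) (hα : S α), Y.map α.op s = σ α hα

/-!
A family of sections of `Y` lying over the restrictions of `x` is a compatible family whose
image under `π` glues to `x`. Since `X` is separated, every gluing of such a family automatically
lies over `x`; since `X` is a sheaf, every compatible family of `Y` lies over some `x`. So the
fibrewise gluing condition is exactly the sheaf condition for `Y`.
-/

namespace CategoryTheory.Presieve

universe w

variable {Y X : Cᵒᵖ ⥤ Type w} (π : Y ⟶ X) {U : C} {R : Presieve U}
  {t : FamilyOfElements Y R}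

theorem IsSeparatedFor.app_eq_of_isAmalgamation (hX : IsSeparatedFor X R) {x : X.obj (op U)}
    (hx : (t.map π).IsAmalgamation x) {s : Y.obj (op U)} (hs : t.IsAmalgamation s) :
    π.app (op U) s = x :=
  hX _ _ _ (hs.map π) hx

theorem IsSeparatedFor.existsUnique_lift_iff (hX : IsSeparatedFor X R) {x : X.obj (op U)}
    (hx : (t.map π).IsAmalgamation x) :
    (∃! s, π.app (op U) s = x ∧ t.IsAmalgamation s) ↔ ∃! s, t.IsAmalgamation s :=
  existsUnique_congr fun _ => and_iff_right_of_imp (hX.app_eq_of_isAmalgamation π hx)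

theorem IsSheafFor.forall_existsUnique_lift_iff (hX : IsSheafFor X R) (ht : t.Compatible) :
    (∀ x, (t.map π).IsAmalgamation x → ∃! s, π.app (op U) s = x ∧ t.IsAmalgamation s) ↔
      ∃! s, t.IsAmalgamation s := by
  obtain ⟨x, hx, -⟩ := hX _ (ht.map π)
  exact ⟨fun h => (hX.isSeparatedFor.existsUnique_lift_iff π hx).1 (h x hx),
    fun h _ hx' => (hX.isSeparatedFor.existsUnique_lift_iff π hx').2 h⟩

end CategoryTheory.Presieve

open Presieve in
theorem representsSheaf_iff_forall_existsUnique_lift (J : GrothendieckTopology C)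
    {Y X : Cᵒᵖ ⥤ Type v} (π : Y ⟶ X) :
    RepresentsSheaf J π ↔ ∀ (U : C) (S : Sieve U), S ∈ J U →
      ∀ t : FamilyOfElements Y (S : Presieve U), t.Compatible →
      ∀ x, (t.map π).IsAmalgamation x →
        ∃! s, π.app (op U) s = x ∧ t.IsAmalgamation s := by
  refine ⟨fun h U S hS t ht x hx => ?_, fun h U x S hS σ hσπ hσ => ?_⟩
  · exact h U x S hS t (fun _ α hα => (hx α hα).symm)
      fun _ _ α hα β => ((compatible_iff_sieveCompatible t).1 ht α β hα).symm
  · exact h U S hS σ ((compatible_iff_sieveCompatible σ).2 fun _ _ α β hα => (hσ α hα β).symm) x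
      fun _ α hα => (hσπ α hα).symm

/-- Let `C` be a small Grothendieck site, `X` a sheaf of sets on `C`, and `π : Y ⟶ X` a
presheaf map.  Then `π` represents a sheaf on the fibred site `C/X` if and only if `Y` is a
sheaf on `C`. -/
theorem represents_sheaf_iff_isSheaf (J : GrothendieckTopology C) {Y X : Cᵒᵖ ⥤ Type v}
    (π : Y ⟶ X) (hX : Presieve.IsSheaf J X) :
    RepresentsSheaf J π ↔ Presieve.IsSheaf J Y := by
  rw [representsSheaf_iff_forall_existsUnique_lift]
  exact forall_congr' fun U => forall₄_congr fun S hS t ht =>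
    (hX S hS).forall_existsUnique_lift_iff π ht
end

section
/- Let M be a right proper closed model category and let f: X → Y be a weak equivalence in M. Then the functor Lf*: Ho(M/X) → Ho(M/Y) induced by composition with f, and the functor Rf_*: Ho(M/Y) → Ho(M/X) induced by pulling back a fibrant replacement (factoring each object α: Z → Y as a trivial cofibration Z → Z_α followed by a fibration p_α: Z_α → Y, and sending α to X ×_Y Z_α → X), form an adjoint equivalence of categories, with Lf* left adjoint to Rf_*. -/
open CategoryTheory Limits

universe v u

attribute [local simp] pullback.lift_fst pullback.lift_snd pullback.lift_fst_assoc pullback.lift_snd_assoc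

/-- `f` is a retract of `g` in the arrow category. -/
def IsRetractOf {M : Type u} [Category.{v} M] {X Y X' Y' : M}
    (f : X ⟶ Y) (g : X' ⟶ Y') : Prop :=
  ∃ (i : Arrow.mk f ⟶ Arrow.mk g) (r : Arrow.mk g ⟶ Arrow.mk f), i ≫ r = 𝟙 _

/-- A closed model structure on a category `M` (which is assumed to have finite limits and
colimits): classes of weak equivalences, cofibrations and fibrations satisfying the closed
model category axioms CM2–CM5. -/
structure ModelStruct (M : Type u) [Category.{v} M] where
  weq : MorphismProperty M
  cof : MorphismProperty M
  fib : MorphismProperty M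
  /-- CM2: two out of three. -/
  weq_comp : ∀ {X Y Z : M} (f : X ⟶ Y) (g : Y ⟶ Z), weq f → weq g → weq (f ≫ g)
  weq_of_comp_left : ∀ {X Y Z : M} (f : X ⟶ Y) (g : Y ⟶ Z), weq f → weq (f ≫ g) → weq g
  weq_of_comp_right : ∀ {X Y Z : M} (f : X ⟶ Y) (g : Y ⟶ Z), weq g → weq (f ≫ g) → weq f
  /-- CM3: the three classes are closed under retracts. -/
  weq_retract : ∀ {X Y X' Y' : M} (f : X ⟶ Y) (g : X' ⟶ Y'), IsRetractOf f g → weq g → weq f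
  cof_retract : ∀ {X Y X' Y' : M} (f : X ⟶ Y) (g : X' ⟶ Y'), IsRetractOf f g → cof g → cof f
  fib_retract : ∀ {X Y X' Y' : M} (f : X ⟶ Y) (g : X' ⟶ Y'), IsRetractOf f g → fib g → fib f
  /-- CM4: lifting. -/
  lifting : ∀ {A B X Y : M} (i : A ⟶ B) (p : X ⟶ Y), cof i → fib p → (weq i ∨ weq p) →
    HasLiftingProperty i p
  /-- CM5: factorization. -/
  fact₁ : ∀ {X Y : M} (f : X ⟶ Y), ∃ (Z : M) (i : X ⟶ Z) (p : Z ⟶ Y),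
    i ≫ p = f ∧ cof i ∧ weq i ∧ fib p
  fact₂ : ∀ {X Y : M} (f : X ⟶ Y), ∃ (Z : M) (i : X ⟶ Z) (p : Z ⟶ Y),
    i ≫ p = f ∧ cof i ∧ fib p ∧ weq p

/-- A model structure is right proper if the pullback of a weak equivalence along a
fibration is a weak equivalence. -/
def ModelStruct.RightProper {M : Type u} [Category.{v} M] [HasFiniteLimits M]
    (S : ModelStruct M) : Prop :=
  ∀ {X Y Z : M} (f : X ⟶ Z) (p : Y ⟶ Z), S.weq f → S.fib p →
    S.weq (pullback.snd f p)

/-- The weak equivalences of the slice category `M/X`: maps whose underlying maps in `M`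
are weak equivalences. -/
def sliceWeq {M : Type u} [Category.{v} M] (S : ModelStruct M) (X : M) :
    MorphismProperty (Over X) :=
  fun _ _ g => S.weq g.left

namespace ModelStruct

variable {M : Type u} [Category.{v} M] (S : ModelStruct M)

lemma weq_id (A : M) : S.weq (𝟙 A) := by
  obtain ⟨Z, i, p, hip, hc, hw, hfb⟩ := S.fact₁ (𝟙 A)
  refine S.weq_retract (𝟙 A) i ⟨Arrow.homMk (u := 𝟙 A) (v := i) (by simp), Arrow.homMk (u := 𝟙 A) (v := p) (by simpa using hip.symm), ?_⟩ hw
  ext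
  · simp
  · simpa using hip

lemma weq_of_isIso {A B : M} (e : A ⟶ B) [IsIso e] : S.weq e := by
  refine S.weq_retract e (𝟙 A) ⟨Arrow.homMk (u := 𝟙 A) (v := inv e) (by simp), Arrow.homMk (u := 𝟙 A) (v := e) (by simp), ?_⟩ (S.weq_id A)
  ext
  · simp
  · simp

lemma weq_iso_comp {A B C : M} (e : A ⟶ B) (w : B ⟶ C) [IsIso e] (hw : S.weq w) :
    S.weq (e ≫ w) :=
  S.weq_comp e w (S.weq_of_isIso e) hw

lemma fib_of_rlp {E B : M} (p : E ⟶ B)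
    (h : ∀ {A B' : M} (i : A ⟶ B'), S.cof i → S.weq i → HasLiftingProperty i p) :
    S.fib p := by
  obtain ⟨Z, i, q, hiq, hc, hw, hfb⟩ := S.fact₁ p
  haveI := h i hc hw
  have sq : CommSq (𝟙 E) i p q := ⟨by simp [hiq]⟩
  refine S.fib_retract p q ⟨Arrow.homMk (u := i) (v := 𝟙 B) (by simp [hiq]), Arrow.homMk (u := sq.lift) (v := 𝟙 B) (by simp), ?_⟩ hfb
  ext
  · simp
  · simp

variable [HasFiniteLimits M]

lemma fib_pullback_snd {Z X Y : M} (p : Z ⟶ Y) (f : X ⟶ Y) (hp : S.fib p) :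
    S.fib (pullback.snd p f) := by
  refine S.fib_of_rlp _ ?_
  intro A B' i hc hw
  haveI := S.lifting i p hc hp (Or.inl hw)
  constructor
  intro a b sq
  have sq' : CommSq (a ≫ pullback.fst p f) i p (b ≫ f) :=
    ⟨by rw [Category.assoc, pullback.condition, ← Category.assoc, sq.w, Category.assoc]⟩
  exact CommSq.HasLift.mk'
    { l := pullback.lift sq'.lift b sq'.fac_right
      fac_left := by
        apply pullback.hom_ext
        · simpa using sq'.fac_left
        · simpa using sq.w.symm
      fac_right := by simp }

lemma fib_pullback_fst {Z X Y : M} (p : Z ⟶ Y) (f : X ⟶ Y) (hf : S.fib f) :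
    S.fib (pullback.fst p f) := by
  refine S.fib_of_rlp _ ?_
  intro A B' i hc hw
  haveI : HasLiftingProperty i (pullback.snd f p) := by
    haveI := S.fib_pullback_snd f p hf
    exact S.lifting i _ hc this (Or.inl hw)
  haveI : HasLiftingProperty i ((pullbackSymmetry p f).hom ≫ pullback.snd f p) :=
    inferInstance
  simpa using this

lemma fib_comp {A B C : M} (p : A ⟶ B) (q : B ⟶ C) (hp : S.fib p) (hq : S.fib q) :
    S.fib (p ≫ q) := by
  refine S.fib_of_rlp _ ?_
  intro A' B' i hc hw
  haveI := S.lifting i p hc hp (Or.inl hw)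
  haveI := S.lifting i q hc hq (Or.inl hw)
  infer_instance

lemma weq_pullback_fst {Z X Y : M} (p : Z ⟶ Y) (f : X ⟶ Y)
    (hS : ∀ {X' Y' Z' : M} (f' : X' ⟶ Z') (p' : Y' ⟶ Z'), S.weq f' → S.fib p' →
      S.weq (pullback.snd f' p'))
    (hf : S.weq f) (hp : S.fib p) : S.weq (pullback.fst p f) := by
  have h := hS f p hf hp
  have : pullback.fst p f = (pullbackSymmetry p f).hom ≫ pullback.snd f p := by simp
  rw [this]
  exact S.weq_iso_comp _ _ h

end ModelStruct

namespace SliceProof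

variable {M : Type u} [Category.{v} M] [HasFiniteLimits M]

/-- A fibrant replacement datum for `α : Over Y`. -/
structure Rep (S : ModelStruct M) {Y : M} (α : Over Y) where
  Z : M
  j : α.left ⟶ Z
  p : Z ⟶ Y
  fac : j ≫ p = α.hom
  cofj : S.cof j
  weqj : S.weq j
  fibp : S.fib p

variable (S : ModelStruct M)

/-- A choice of fibrant replacement. -/
noncomputable def rep {Y : M} (α : Over Y) : Rep S α :=
  Classical.choice (by
    obtain ⟨Z, i, p, h1, h2, h3, h4⟩ := S.fact₁ α.hom
    exact ⟨⟨Z, i, p, h1, h2, h3, h4⟩⟩)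

/-- The chosen fibrant replacement object of `α` in `Over Y`. -/
noncomputable abbrev robj {Y : M} (α : Over Y) : Over Y := Over.mk (rep S α).p

lemma liftSq {Y : M} {α β : Over Y} (u : α ⟶ β) :
    CommSq (u.left ≫ (rep S β).j) (rep S α).j (rep S β).p (rep S α).p :=
  ⟨by rw [Category.assoc, (rep S β).fac, Over.w u, (rep S α).fac]⟩

/-- A chosen lift of `u` to fibrant replacements. -/
noncomputable def liftMap {Y : M} {α β : Over Y} (u : α ⟶ β) : (rep S α).Z ⟶ (rep S β).Z :=
  haveI := S.lifting (rep S α).j (rep S β).p (rep S α).cofj (rep S β).fibp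
    (Or.inl (rep S α).weqj)
  (liftSq S u).lift

lemma liftMap_j {Y : M} {α β : Over Y} (u : α ⟶ β) :
    (rep S α).j ≫ liftMap S u = u.left ≫ (rep S β).j :=
  haveI := S.lifting (rep S α).j (rep S β).p (rep S α).cofj (rep S β).fibp
    (Or.inl (rep S α).weqj)
  (liftSq S u).fac_left

lemma liftMap_p {Y : M} {α β : Over Y} (u : α ⟶ β) :
    liftMap S u ≫ (rep S β).p = (rep S α).p :=
  haveI := S.lifting (rep S α).j (rep S β).p (rep S α).cofj (rep S β).fibp
    (Or.inl (rep S α).weqj)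
  (liftSq S u).fac_right

variable {X Y : M} (f : X ⟶ Y)

section
variable (hS : S.RightProper) (hf : S.weq f)
include hS hf

lemma weq_fst {Z : M} (p : Z ⟶ Y) (hp : S.fib p) : S.weq (pullback.fst p f) :=
  S.weq_pullback_fst p f (fun f' p' h1 h2 => hS f' p' h1 h2) hf hp

lemma weq_pullback_map {m m' : Over Y} (w : m ⟶ m') (hm : S.fib m.hom) (hm' : S.fib m'.hom)
    (hw : S.weq w.left) : S.weq ((Over.pullback f).map w).left := by
  have h1 : ((Over.pullback f).map w).left ≫ pullback.fst m'.hom f =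
      pullback.fst m.hom f ≫ w.left := by
    dsimp [Over.pullback]
    simp
  refine S.weq_of_comp_right _ _ (weq_fst S f hS hf m'.hom hm') ?_
  rw [h1]
  exact S.weq_comp _ _ (weq_fst S f hS hf m.hom hm) hw

end


lemma key (hS : S.RightProper) (hf : S.weq f)
    {A Zα Zβ : M} (pα : Zα ⟶ Y) (pβ : Zβ ⟶ Y) (hpα : S.fib pα) (hpβ : S.fib pβ)
    (j : A ⟶ Zα) (hjc : S.cof j) (hjw : S.weq j)
    (l l' : Zα ⟶ Zβ) (hl : l ≫ pβ = pα) (hl' : l' ≫ pβ = pα) (hj : j ≫ l = j ≫ l') :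
    (sliceWeq S X).Q.map ((Over.pullback f).map
      (Over.homMk l (by simpa using hl) : Over.mk pα ⟶ Over.mk pβ)) =
    (sliceWeq S X).Q.map ((Over.pullback f).map
      (Over.homMk l' (by simpa using hl'))) := by
  -- the two-sided path object
  obtain ⟨P, s, q, hsq, hsc, hsw, hqf⟩ := S.fact₁ (pullback.lift (𝟙 Zβ) (𝟙 Zβ) rfl :
    Zβ ⟶ pullback pβ pβ)
  have hc : l ≫ pβ = l' ≫ pβ := by rw [hl, hl']
  -- the lift H
  haveI := S.lifting j q hjc hqf (Or.inl hjw)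
  have sqH : CommSq (j ≫ l ≫ s) j q (pullback.lift l l' hc) := by
    constructor
    apply pullback.hom_ext
    · simp only [Category.assoc]
      rw [reassoc_of% hsq]
      simp
    · simp only [Category.assoc]
      rw [reassoc_of% hsq]
      simp [hj]
  -- over-category morphisms
  let mα : Over Y := Over.mk pα
  let mβ : Over Y := Over.mk pβ
  let mP : Over Y := Over.mk (q ≫ pullback.fst pβ pβ ≫ pβ)
  have hfibP : S.fib (q ≫ pullback.fst pβ pβ ≫ pβ) :=
    S.fib_comp _ _ hqf (S.fib_comp _ _ (S.fib_pullback_fst pβ pβ hpβ) hpβ)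
  let Smor : mβ ⟶ mP := Over.homMk s (by
    simp only [mβ, mP, Over.mk_hom]
    rw [reassoc_of% hsq]
    simp)
  let Pi0 : mP ⟶ mβ := Over.homMk (q ≫ pullback.fst pβ pβ) (by simp [mβ, mP])
  let Pi1 : mP ⟶ mβ := Over.homMk (q ≫ pullback.snd pβ pβ) (by
    simp only [mβ, mP, Over.mk_hom, Category.assoc]
    rw [← pullback.condition])
  let Hmor : mα ⟶ mP := Over.homMk sqH.lift (by
    simp only [mα, mP, Over.mk_hom]
    rw [reassoc_of% sqH.fac_right]
    simp [hl])
  have e0 : Hmor ≫ Pi0 = (Over.homMk l (by simpa using hl) : Over.mk pα ⟶ Over.mk pβ) := by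
    ext
    show sqH.lift ≫ q ≫ pullback.fst pβ pβ = l
    rw [reassoc_of% sqH.fac_right]
    simp
  have e1 : Hmor ≫ Pi1 = (Over.homMk l' (by simpa using hl') : Over.mk pα ⟶ Over.mk pβ) := by
    ext
    show sqH.lift ≫ q ≫ pullback.snd pβ pβ = l'
    rw [reassoc_of% sqH.fac_right]
    simp
  have e2 : Smor ≫ Pi0 = 𝟙 mβ := by
    ext
    show s ≫ q ≫ pullback.fst pβ pβ = 𝟙 Zβ
    rw [reassoc_of% hsq]
    simp
  have e3 : Smor ≫ Pi1 = 𝟙 mβ := by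
    ext
    show s ≫ q ≫ pullback.snd pβ pβ = 𝟙 Zβ
    rw [reassoc_of% hsq]
    simp
  -- pass to the localization
  set Q := (sliceWeq S X).Q
  set FP := Over.pullback f
  have hiso : IsIso (Q.map (FP.map Smor)) := by
    refine Localization.inverts Q (sliceWeq S X) _ ?_
    exact weq_pullback_map S f hS hf Smor hpβ hfibP hsw
  have h0 : Q.map (FP.map Smor) ≫ Q.map (FP.map Pi0) = 𝟙 _ := by
    rw [← Q.map_comp, ← FP.map_comp, e2]
    simp
  have h1 : Q.map (FP.map Smor) ≫ Q.map (FP.map Pi1) = 𝟙 _ := by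
    rw [← Q.map_comp, ← FP.map_comp, e3]
    simp
  have hP : Q.map (FP.map Pi0) = Q.map (FP.map Pi1) := by
    haveI := hiso
    rw [← cancel_epi (Q.map (FP.map Smor)), h0, h1]
  calc Q.map (FP.map (Over.homMk l (by simpa using hl) : Over.mk pα ⟶ Over.mk pβ))
      = Q.map (FP.map (Hmor ≫ Pi0)) := by rw [e0]
    _ = Q.map (FP.map Hmor) ≫ Q.map (FP.map Pi0) := by rw [FP.map_comp, Q.map_comp]
    _ = Q.map (FP.map Hmor) ≫ Q.map (FP.map Pi1) := by rw [hP]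
    _ = Q.map (FP.map (Hmor ≫ Pi1)) := by rw [FP.map_comp, Q.map_comp]
    _ = Q.map (FP.map (Over.homMk l' (by exact hl'))) := by rw [e1]


variable (hS : S.RightProper) (hf : S.weq f)

/-- The right derived pullback functor `Over Y ⥤ Ho(M/X)`. -/
noncomputable def Gfun : Over Y ⥤ (sliceWeq S X).Localization where
  obj α := (sliceWeq S X).Q.obj ((Over.pullback f).obj (robj S α))
  map {α β} u := (sliceWeq S X).Q.map ((Over.pullback f).map
    (Over.homMk (liftMap S u) (liftMap_p S u) : robj S α ⟶ robj S β))
  map_id α := by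
    rw [key S f hS hf (rep S α).p (rep S α).p (rep S α).fibp (rep S α).fibp
      (rep S α).j (rep S α).cofj (rep S α).weqj
      (liftMap S (𝟙 α)) (𝟙 _) (liftMap_p S (𝟙 α)) (Category.id_comp _)
      (by rw [liftMap_j]; simp)]
    have h2 : (Over.homMk (𝟙 (rep S α).Z) (Category.id_comp _) :
        robj S α ⟶ robj S α) = 𝟙 _ := Over.OverMorphism.ext rfl
    rw [h2]
    simp
  map_comp {α β γ} u v := by
    rw [key S f hS hf (rep S α).p (rep S γ).p (rep S α).fibp (rep S γ).fibp
      (rep S α).j (rep S α).cofj (rep S α).weqj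
      (liftMap S (u ≫ v)) (liftMap S u ≫ liftMap S v) (liftMap_p S (u ≫ v))
      (by simp only [robj, Over.mk_hom, Category.assoc]; rw [liftMap_p, liftMap_p])
      (by rw [liftMap_j, ← Category.assoc, liftMap_j, Category.assoc, liftMap_j]; simp)]
    have h2 : (Over.homMk (liftMap S u ≫ liftMap S v)
        (by simp only [robj, Over.mk_hom, Category.assoc]; rw [liftMap_p, liftMap_p]) : robj S α ⟶ robj S γ) =
        (Over.homMk (liftMap S u) (liftMap_p S u) : robj S α ⟶ robj S β) ≫
          (Over.homMk (liftMap S v) (liftMap_p S v) : robj S β ⟶ robj S γ) := Over.OverMorphism.ext (by simp)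
    rw [h2, Functor.map_comp, Functor.map_comp]


lemma Gfun_inverts : (sliceWeq S Y).IsInvertedBy (Gfun S f hS hf) := by
  intro α β u hu
  dsimp [Gfun]
  refine Localization.inverts _ (sliceWeq S X) _ ?_
  refine weq_pullback_map S f hS hf _ (rep S α).fibp (rep S β).fibp ?_
  have h1 : S.weq ((rep S α).j ≫ liftMap S u) := by
    rw [liftMap_j]
    exact S.weq_comp _ _ hu (rep S β).weqj
  simpa using S.weq_of_comp_left _ _ (rep S α).weqj h1

/-- The lifted derived pullback functor on localizations. -/
noncomputable def Glift : (sliceWeq S Y).Localization ⥤ (sliceWeq S X).Localization :=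
  Localization.lift (Gfun S f hS hf) (Gfun_inverts S f hS hf) (sliceWeq S Y).Q

noncomputable instance : Localization.Lifting (sliceWeq S Y).Q (sliceWeq S Y)
    (Gfun S f hS hf) (Glift S f hS hf) := by
  dsimp [Glift]; infer_instance

lemma F0_inverts : (sliceWeq S X).IsInvertedBy (Over.map f ⋙ (sliceWeq S Y).Q) := by
  intro α β u hu
  refine Localization.inverts (sliceWeq S Y).Q (sliceWeq S Y) _ ?_
  simpa [sliceWeq] using hu

/-- The lifted composition functor on localizations. -/
noncomputable def Flift : (sliceWeq S X).Localization ⥤ (sliceWeq S Y).Localization :=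
  Localization.lift (Over.map f ⋙ (sliceWeq S Y).Q) (F0_inverts S f) (sliceWeq S X).Q

noncomputable instance : Localization.Lifting (sliceWeq S X).Q (sliceWeq S X)
    (Over.map f ⋙ (sliceWeq S Y).Q) (Flift S f) := by
  dsimp [Flift]; infer_instance

/-- The unit comparison map in `Over X`. -/
noncomputable def etaHom (α' : Over X) :
    α' ⟶ (Over.pullback f).obj (robj S ((Over.map f).obj α')) :=
  Over.homMk (pullback.lift (rep S ((Over.map f).obj α')).j α'.hom
    (by
      simp only [robj, Over.mk_hom]
      rw [(rep S ((Over.map f).obj α')).fac]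
      simp))
    (by simpa using pullback.lift_snd _ _ _)

lemma etaHom_weq (hS : S.RightProper) (hf : S.weq f) (α' : Over X) :
    S.weq (etaHom S f α').left := by
  refine S.weq_of_comp_right _ (pullback.fst (rep S ((Over.map f).obj α')).p f)
    (weq_fst S f hS hf _ (rep S ((Over.map f).obj α')).fibp) ?_
  have h : (etaHom S f α').left ≫ pullback.fst (rep S ((Over.map f).obj α')).p f =
      (rep S ((Over.map f).obj α')).j := by
    simp [etaHom]
  rw [h]
  exact (rep S ((Over.map f).obj α')).weqj

lemma eta_natural {α' β' : Over X} (u : α' ⟶ β') :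
    etaHom S f α' ≫ (Over.pullback f).map
      (Over.homMk (liftMap S ((Over.map f).map u)) (liftMap_p S ((Over.map f).map u)) :
        robj S ((Over.map f).obj α') ⟶ robj S ((Over.map f).obj β')) =
    u ≫ etaHom S f β' := by
  ext
  dsimp [etaHom, Over.pullback]
  apply pullback.hom_ext
  · have := liftMap_j S ((Over.map f).map u)
    simp only [Category.assoc, Over.homMk_left, pullback.lift_fst, pullback.lift_fst_assoc]
    rw [this]
    simp
  · simp [Over.w u]

/-- The natural isomorphism `Q_X ≅ Over.map f ⋙ Gfun`. -/
noncomputable def theta : (sliceWeq S X).Q ≅ Over.map f ⋙ Gfun S f hS hf :=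
  NatIso.ofComponents
    (fun α' => by
      haveI : IsIso ((sliceWeq S X).Q.map (etaHom S f α')) :=
        Localization.inverts _ (sliceWeq S X) _ (etaHom_weq S f hS hf α')
      exact @asIso _ _ _ _ ((sliceWeq S X).Q.map (etaHom S f α')) this)
    (fun {α' β'} u => by
      dsimp [Gfun]
      rw [← Functor.map_comp, ← Functor.map_comp, eta_natural])

/-- The iso `(Over.map f ⋙ Q_Y) ⋙ Glift ≅ Q_X`. -/
noncomputable def aIso : (Over.map f ⋙ (sliceWeq S Y).Q) ⋙ Glift S f hS hf ≅ (sliceWeq S X).Q :=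
  Functor.associator _ _ _ ≪≫
    Functor.isoWhiskerLeft (Over.map f)
      (Localization.Lifting.iso (sliceWeq S Y).Q (sliceWeq S Y) (Gfun S f hS hf)
        (Glift S f hS hf)) ≪≫ (theta S f hS hf).symm

/-- The projection morphism in `Over Y`. -/
noncomputable def w1 (α : Over Y) :
    (Over.map f).obj ((Over.pullback f).obj (robj S α)) ⟶ robj S α :=
  Over.homMk (pullback.fst (rep S α).p f) (by simpa using pullback.condition)

/-- The replacement morphism in `Over Y`. -/
noncomputable def jmor (α : Over Y) : α ⟶ robj S α :=
  Over.homMk (rep S α).j (by simpa using (rep S α).fac)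

lemma w1_natural {α α' : Over Y} (u : α ⟶ α') :
    (Over.map f).map ((Over.pullback f).map
      (Over.homMk (liftMap S u) (liftMap_p S u) : robj S α ⟶ robj S α')) ≫ w1 S f α' =
    w1 S f α ≫ (Over.homMk (liftMap S u) (liftMap_p S u) : robj S α ⟶ robj S α') := by
  ext
  dsimp [w1, Over.pullback]
  simp

lemma jmor_natural {α α' : Over Y} (u : α ⟶ α') :
    jmor S α ≫ (Over.homMk (liftMap S u) (liftMap_p S u) : robj S α ⟶ robj S α') =
    u ≫ jmor S α' := by
  ext
  dsimp [jmor]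
  exact liftMap_j S u


lemma w1_weq (hS : S.RightProper) (hf : S.weq f) (α : Over Y) : S.weq (w1 S f α).left :=
  weq_fst S f hS hf _ (rep S α).fibp

/-- The counit comparison iso. -/
noncomputable def bIsoApp (α : Over Y) :
    (Gfun S f hS hf ⋙ Flift S f).obj α ≅ (sliceWeq S Y).Q.obj α := by
  haveI h1 : IsIso ((sliceWeq S Y).Q.map (w1 S f α)) :=
    Localization.inverts _ (sliceWeq S Y) _ (w1_weq S f hS hf α)
  haveI h2 : IsIso ((sliceWeq S Y).Q.map (jmor S α)) :=
    Localization.inverts _ (sliceWeq S Y) _ ((rep S α).weqj)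
  exact ((Localization.Lifting.iso (sliceWeq S X).Q (sliceWeq S X)
      (Over.map f ⋙ (sliceWeq S Y).Q) (Flift S f)).app ((Over.pullback f).obj (robj S α))) ≪≫
    asIso ((sliceWeq S Y).Q.map (w1 S f α)) ≪≫
    (asIso ((sliceWeq S Y).Q.map (jmor S α))).symm

/-- The iso `Gfun ⋙ Flift ≅ Q_Y`. -/
noncomputable def bIso : Gfun S f hS hf ⋙ Flift S f ≅ (sliceWeq S Y).Q := by
  refine NatIso.ofComponents (bIsoApp S f hS hf) ?_
  intro α α' u
  haveI h1 : IsIso ((sliceWeq S Y).Q.map (jmor S α)) :=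
    Localization.inverts _ (sliceWeq S Y) _ ((rep S α).weqj)
  haveI h1' : IsIso ((sliceWeq S Y).Q.map (jmor S α')) :=
    Localization.inverts _ (sliceWeq S Y) _ ((rep S α').weqj)
  dsimp [bIsoApp, Gfun]
  have hnat := (Localization.Lifting.iso (sliceWeq S X).Q (sliceWeq S X)
      (Over.map f ⋙ (sliceWeq S Y).Q) (Flift S f)).hom.naturality
      ((Over.pullback f).map (Over.homMk (liftMap S u) (liftMap_p S u) :
        robj S α ⟶ robj S α'))
  dsimp at hnat
  rw [← Category.assoc, hnat]
  simp only [Category.assoc]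
  congr 1
  -- now a computation purely in Q_Y images
  rw [← Functor.map_comp_assoc, w1_natural]
  rw [Functor.map_comp_assoc]
  congr 1
  -- Q(hl) ≫ inv Q(jmor α') = inv Q(jmor α) ≫ Q(u)
  rw [IsIso.comp_inv_eq, Category.assoc, IsIso.eq_inv_comp,
    ← Functor.map_comp, ← Functor.map_comp, jmor_natural]

end SliceProof

namespace SliceProof

variable {M : Type u} [Category.{v} M] [HasFiniteLimits M]
variable (S : ModelStruct M) {X Y : M} (f : X ⟶ Y) (hS : S.RightProper) (hf : S.weq f)

/-- The adjoint equivalence of homotopy categories of slices. -/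
noncomputable def theEquiv :
    (sliceWeq S X).Localization ≌ (sliceWeq S Y).Localization :=
  Localization.equivalence (sliceWeq S X).Q (sliceWeq S X) (sliceWeq S Y).Q (sliceWeq S Y)
    (Over.map f ⋙ (sliceWeq S Y).Q) (Flift S f) (Gfun S f hS hf) (Glift S f hS hf)
    (aIso S f hS hf) (bIso S f hS hf)

end SliceProof

/-- Let `M` be a right proper closed model category and `f : X ⟶ Y` a weak equivalence in
`M`.  Then the functor `Lf* : Ho(M/X) ⟶ Ho(M/Y)` induced by composition with `f`, and the
functor `Rf_* : Ho(M/Y) ⟶ Ho(M/X)` induced by pulling back a fibrant replacement (factor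
`α : Z ⟶ Y` as a trivial cofibration `j_α : Z ⟶ Z_α` followed by a fibration
`p_α : Z_α ⟶ Y`, and send `α` to `X ×_Y Z_α ⟶ X`), form an adjoint equivalence of
categories, with `Lf*` left adjoint to `Rf_*`.  We express this as: there is an (adjoint)
equivalence `E` of the homotopy categories (localizations at the weak equivalences) whose
functor is induced by composition with `f` and whose inverse sends each object to the
pullback along `f` of any fibrant replacement. -/
theorem slice_adjoint_equivalence_of_weq {M : Type u} [Category.{v} M] [HasFiniteLimits M]
    [HasFiniteColimits M]
    (S : ModelStruct M) (hS : S.RightProper) {X Y : M} (f : X ⟶ Y) (hf : S.weq f) :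
    ∃ E : (sliceWeq S X).Localization ≌ (sliceWeq S Y).Localization,
      Nonempty ((sliceWeq S X).Q ⋙ E.functor ≅ Over.map f ⋙ (sliceWeq S Y).Q) ∧
      ∀ (α : Over Y) (Zα : M) (j : α.left ⟶ Zα) (p : Zα ⟶ Y),
        j ≫ p = α.hom → S.cof j → S.weq j → S.fib p →
        Nonempty (E.inverse.obj ((sliceWeq S Y).Q.obj α) ≅
          (sliceWeq S X).Q.obj (Over.mk (pullback.snd p f))) := by
  refine ⟨SliceProof.theEquiv S f hS hf, ⟨?_⟩, ?_⟩
  · exact Localization.Lifting.iso (sliceWeq S X).Q (sliceWeq S X)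
      (Over.map f ⋙ (sliceWeq S Y).Q) (SliceProof.Flift S f)
  · intro α Zα j p fac hc hw hfib
    haveI := S.lifting j (SliceProof.rep S α).p hc (SliceProof.rep S α).fibp (Or.inl hw)
    have sqk : CommSq (SliceProof.rep S α).j j (SliceProof.rep S α).p p :=
      ⟨by rw [(SliceProof.rep S α).fac, fac]⟩
    have hkweq : S.weq sqk.lift :=
      S.weq_of_comp_left j sqk.lift hw
        (by rw [sqk.fac_left]; exact (SliceProof.rep S α).weqj)
    let kmor : Over.mk p ⟶ SliceProof.robj S α :=
      Over.homMk sqk.lift (by simpa using sqk.fac_right)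
    have hkw : sliceWeq S X ((Over.pullback f).map kmor) :=
      SliceProof.weq_pullback_map S f hS hf kmor (by simpa using hfib)
        (SliceProof.rep S α).fibp (by exact hkweq)
    haveI : IsIso ((sliceWeq S X).Q.map ((Over.pullback f).map kmor)) :=
      Localization.inverts _ (sliceWeq S X) _ hkw
    exact ⟨(Localization.Lifting.iso (sliceWeq S Y).Q (sliceWeq S Y)
        (SliceProof.Gfun S f hS hf) (SliceProof.Glift S f hS hf)).app α ≪≫
      (asIso ((sliceWeq S X).Q.map ((Over.pullback f).map kmor))).symm⟩
end
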